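/- Let E be a 2-coloured graph and C a complete collection of squares in E. Suppose z = z₁…zₙ ∈ E* is a path of length n ≥ 2 whose last two edges have colours c(z_{n−1}) = c_b and c(zₙ) = c_a, and suppose z traverses a C-compatible coloured-graph morphism λ : E_{d*(z)} → E. Write d*(z) = u·b·a for u ∈ BS(2,1)⁺ (so that d*(z) = u·a·b² in BS(2,1)⁺). Then the path z₁…z_{n−2}·λ(u, ua)·λ(ua, uab)·λ(uab, uab²) also traverses λ. -/

import Mathlib

/-- The single defining relation of `BS(2,1)⁺`: `a·b·b ~ b·a`
(generator `false` is `a`, generator `true` is `b`). -/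
def bsStep : FreeMonoid Bool → FreeMonoid Bool → Prop := fun x y =>
  x = .of false * .of true * .of true ∧ y = .of true * .of false

/-- The Baumslag–Solitar monoid `BS(2,1)⁺ = ⟨a, b ∣ a b² = b a⟩`. -/
abbrev BS : Type := PresentedMonoid bsStep

/-- The generator `a` of `BS(2,1)⁺`. -/
def BSa : BS := PresentedMonoid.of bsStep false

/-- The generator `b` of `BS(2,1)⁺`. -/
def BSb : BS := PresentedMonoid.of bsStep true

/-- The defining relation `a b² = b a` in `BS(2,1)⁺`. -/
theorem bs_rel : BSa * BSb * BSb = BSb * BSa :=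
  Quotient.sound (ConGen.Rel.of _ _ ⟨rfl, rfl⟩)

/-- The generator of `BS(2,1)⁺` corresponding to a colour. -/
def bsGen : Bool → BS
  | false => BSa
  | true => BSb

/-- A 2-coloured graph: a directed graph `(E⁰, E¹, r, s)` together with a colour map
`c : E¹ → Bool` (`false` is the first colour, `true` the second). -/
structure TwoColouredGraph where
  V : Type
  Edge : Type
  r : Edge → V
  s : Edge → V
  c : Edge → Bool

/-- A coloured-graph morphism: a graph morphism preserving colours. -/
structure CGMor (F E : TwoColouredGraph) where
  onV : F.V → E.V
  onE : F.Edge → E.Edge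
  map_r : ∀ e, E.r (onE e) = onV (F.r e)
  map_s : ∀ e, E.s (onE e) = onV (F.s e)
  map_c : ∀ e, E.c (onE e) = F.c e

/-- `x` is a path (finite sequence of composable edges) with range `v`;
vertices are regarded as the paths of length 0. -/
def IsPathFrom (E : TwoColouredGraph) (v : E.V) (x : List E.Edge) : Prop :=
  (∀ e ∈ x.head?, E.r e = v) ∧ List.Chain' (fun e f => E.s e = E.r f) x

/-- The model 2-coloured graph `E_w` for `w ∈ BS(2,1)⁺`: vertices are the left divisors
of `w`, and there is an edge `(z, z·l)` of colour `l` whenever `z` and `z·l` divide `w`. -/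
def bsModel (w : BS) : TwoColouredGraph where
  V := {z : BS // z ∣ w}
  Edge := {p : BS × Bool // p.1 ∣ w ∧ p.1 * bsGen p.2 ∣ w}
  r e := ⟨e.1.1, e.2.1⟩
  s e := ⟨e.1.1 * bsGen e.1.2, e.2.2⟩
  c e := e.1.2

/-- The degree `d*(x) ∈ BS(2,1)⁺` of a path: the product of the generators
corresponding to the colours of its edges. -/
def pathDegBS (E : TwoColouredGraph) (x : List E.Edge) : BS :=
  (x.map fun e => bsGen (E.c e)).prod

theorem pathDegBS_take_mul_drop (E : TwoColouredGraph) (x : List E.Edge) (n : ℕ) :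
    pathDegBS E (x.take n) * pathDegBS E (x.drop n) = pathDegBS E x := by
  unfold pathDegBS
  rw [← List.prod_append, ← List.map_append, List.take_append_drop]

theorem pathDegBS_take_dvd (E : TwoColouredGraph) (x : List E.Edge) (n : ℕ) :
    pathDegBS E (x.take n) ∣ pathDegBS E x :=
  ⟨pathDegBS E (x.drop n), (pathDegBS_take_mul_drop E x n).symm⟩

theorem pathDegBS_take_mul_gen_dvd (E : TwoColouredGraph) (x : List E.Edge) (n : ℕ)
    (hn : n < x.length) :
    pathDegBS E (x.take n) * bsGen (E.c (x.get ⟨n, hn⟩)) ∣ pathDegBS E x := by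
  refine ⟨pathDegBS E (x.drop (n + 1)), ?_⟩
  rw [mul_assoc, ← pathDegBS_take_mul_drop E x n]
  congr 1
  have h := List.drop_eq_getElem_cons hn
  rw [pathDegBS, pathDegBS, h, List.map_cons, List.prod_cons, List.get_eq_getElem]

/-- `x` (a path with range `v`) traverses the coloured-graph morphism `λ : E_w → E`. -/
def TraversesBS (E : TwoColouredGraph) {w : BS} (lam : CGMor (bsModel w) E)
    (v : E.V) (x : List E.Edge) : Prop :=
  ∃ hd : pathDegBS E x = w,
    lam.onV ⟨1, one_dvd w⟩ = v ∧
    ∀ (n : ℕ) (hn : n < x.length),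
      lam.onE ⟨(pathDegBS E (x.take n), E.c (x.get ⟨n, hn⟩)),
        hd ▸ pathDegBS_take_dvd E x n,
        hd ▸ pathDegBS_take_mul_gen_dvd E x n hn⟩ = x.get ⟨n, hn⟩

/-- The restriction `λ|_{E_{w₁}}` of `λ : E_w → E` along a divisor `w₁ ∣ w`. -/
def restrictBS {E : TwoColouredGraph} {w : BS} (lam : CGMor (bsModel w) E)
    (w₁ : BS) (h : w₁ ∣ w) : CGMor (bsModel w₁) E where
  onV z := lam.onV ⟨z.1, z.2.trans h⟩
  onE e := lam.onE ⟨e.1, e.2.1.trans h, e.2.2.trans h⟩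
  map_r e := lam.map_r _
  map_s e := lam.map_s _
  map_c e := lam.map_c _

/-- The translated restriction `λ|*_{[w₁, w₁w₂]} : E_{w₂} → E`, `z ↦ λ(w₁ z)`,
of `λ : E_w → E` where `w = w₁ w₂`. -/
def starRestrictBS {E : TwoColouredGraph} {w : BS} (lam : CGMor (bsModel w) E)
    (w₁ w₂ : BS) (h : w = w₁ * w₂) : CGMor (bsModel w₂) E where
  onV z := lam.onV ⟨w₁ * z.1, (mul_dvd_mul_left w₁ z.2).trans (dvd_of_eq h.symm)⟩
  onE e := lam.onE ⟨(w₁ * e.1.1, e.1.2),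
    (mul_dvd_mul_left w₁ e.2.1).trans (dvd_of_eq h.symm),
    by rw [mul_assoc]; exact (mul_dvd_mul_left w₁ e.2.2).trans (dvd_of_eq h.symm)⟩
  map_r e := lam.map_r _
  map_s e := by
    exact (lam.map_s _).trans
      (congrArg lam.onV (Subtype.ext (mul_assoc w₁ e.1.1 (bsGen e.1.2))))
  map_c e := lam.map_c _

/-- A square in `E`: a coloured-graph morphism `φ : E_{ba} → E`. -/
abbrev SquareBS (E : TwoColouredGraph) := CGMor (bsModel (BSb * BSa)) E

theorem dvd_a_ba : BSa ∣ BSb * BSa := ⟨BSb * BSb, by rw [← mul_assoc, bs_rel]⟩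
theorem dvd_ab_ba : BSa * BSb ∣ BSb * BSa := ⟨BSb, bs_rel.symm⟩
theorem dvd_b_ba : BSb ∣ BSb * BSa := ⟨BSa, rfl⟩

/-- The edge `(e, a)` of `E_{ba}`. -/
def sqEdge_e_a : (bsModel (BSb * BSa)).Edge :=
  ⟨(1, false), one_dvd _, by rw [one_mul]; exact dvd_a_ba⟩

/-- The edge `(a, ab)` of `E_{ba}`. -/
def sqEdge_a_ab : (bsModel (BSb * BSa)).Edge := ⟨(BSa, true), dvd_a_ba, dvd_ab_ba⟩

/-- The edge `(ab, ab²)` of `E_{ba}`. -/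
def sqEdge_ab_abb : (bsModel (BSb * BSa)).Edge := ⟨(BSa * BSb, true), dvd_ab_ba, dvd_of_eq bs_rel⟩

/-- The edge `(e, b)` of `E_{ba}`. -/
def sqEdge_e_b : (bsModel (BSb * BSa)).Edge :=
  ⟨(1, true), one_dvd _, by rw [one_mul]; exact dvd_b_ba⟩

/-- The edge `(b, ba)` of `E_{ba}`. -/
def sqEdge_b_ba : (bsModel (BSb * BSa)).Edge := ⟨(BSb, false), dvd_b_ba, dvd_refl _⟩

/-- A collection `C` of squares in `E` is complete if every `c_a c_b c_b`-coloured path is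
the top-plus-right side of a unique square in `C`, and every `c_b c_a`-coloured path is
the left-plus-bottom side of a unique square in `C`. -/
def IsCompleteBS (E : TwoColouredGraph) (C : Set (SquareBS E)) : Prop :=
  (∀ x₁ x₂ x₃ : E.Edge, E.s x₁ = E.r x₂ → E.s x₂ = E.r x₃ →
      E.c x₁ = false → E.c x₂ = true → E.c x₃ = true →
      ∃! φ : SquareBS E, φ ∈ C ∧ x₁ = φ.onE sqEdge_e_a ∧ x₂ = φ.onE sqEdge_a_ab ∧
        x₃ = φ.onE sqEdge_ab_abb) ∧
  (∀ y₁ y₂ : E.Edge, E.s y₁ = E.r y₂ → E.c y₁ = true → E.c y₂ = false →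
      ∃! φ : SquareBS E, φ ∈ C ∧ y₁ = φ.onE sqEdge_e_b ∧ y₂ = φ.onE sqEdge_b_ba)

/-- The square `φ` occurs in `λ : E_w → E` if there is an `m ∈ BS(2,1)⁺` such that `φ` is the
translated restriction of `λ` to the copy `[m, m·ba]` of `E_{ba}` inside `E_w`. -/
def OccursBS {E : TwoColouredGraph} {w : BS} (φ : SquareBS E) (lam : CGMor (bsModel w) E) : Prop :=
  ∃ (m : BS) (h : m * (BSb * BSa) ∣ w),
    (∀ z : (bsModel (BSb * BSa)).V,
      lam.onV ⟨m * z.1, (mul_dvd_mul_left m z.2).trans h⟩ = φ.onV z) ∧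
    (∀ e : (bsModel (BSb * BSa)).Edge,
      lam.onE ⟨(m * e.1.1, e.1.2), (mul_dvd_mul_left m e.2.1).trans h,
        by rw [mul_assoc]; exact (mul_dvd_mul_left m e.2.2).trans h⟩ = φ.onE e)

/-- `λ` is `C`-compatible if every square occurring in `λ` belongs to `C`. -/
def CompatibleBS {E : TwoColouredGraph} (C : Set (SquareBS E)) {w : BS}
    (lam : CGMor (bsModel w) E) : Prop :=
  ∀ φ : SquareBS E, OccursBS φ lam → φ ∈ C

/-- The monoid homomorphism `BS(2,1)⁺ → (ℕ, ×)` killing both generators. -/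
def bsToNat : BS →* ℕ :=
  PresentedMonoid.lift (fun _ => (0 : ℕ)) (by
    rintro x y ⟨hx, hy⟩
    subst hx; subst hy
    simp)

theorem bsToNat_gen (l : Bool) : bsToNat (bsGen l) = 0 := by
  cases l <;> rfl

/-- The model graph `E_e` over the identity of `BS(2,1)⁺` has no edges. -/
theorem bsModel_one_no_edge (e : (bsModel 1).Edge) : False := by
  obtain ⟨u, hu⟩ := e.2.2
  have h := congrArg bsToNat hu
  rw [map_one, map_mul, map_mul, bsToNat_gen, mul_zero, zero_mul] at h
  exact one_ne_zero h

/-- The identity morphism `λ_v : E_e → E`, `λ_v(e) = v`. -/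
def idMorBS (E : TwoColouredGraph) (v : E.V) : CGMor (bsModel 1) E where
  onV _ := v
  onE e := (bsModel_one_no_edge e).elim
  map_r e := (bsModel_one_no_edge e).elim
  map_s e := (bsModel_one_no_edge e).elim
  map_c e := (bsModel_one_no_edge e).elim

theorem idMorBS_compatible (E : TwoColouredGraph) (C : Set (SquareBS E)) (v : E.V) :
    CompatibleBS C (idMorBS E v) := by
  rintro φ ⟨m, h, -, -⟩
  obtain ⟨u, hu⟩ := h
  have h1 := congrArg bsToNat hu
  rw [map_one, map_mul, map_mul, map_mul] at h1
  rw [show bsToNat BSb = 0 from rfl] at h1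
  simp at h1

/-- The set `Λ = ⋃_{w} Λ^w` of all `C`-compatible coloured-graph morphisms into `E`. -/
def LamBS (E : TwoColouredGraph) (C : Set (SquareBS E)) : Type :=
  Σ w : BS, {lam : CGMor (bsModel w) E // CompatibleBS C lam}

/-- The degree `d(λ) = w` of `λ : E_w → E`. -/
def LamBS.deg {E : TwoColouredGraph} {C : Set (SquareBS E)} (α : LamBS E C) : BS := α.1

/-- The range `r(λ) = λ(e)`. -/
def LamBS.rV {E : TwoColouredGraph} {C : Set (SquareBS E)} (α : LamBS E C) : E.V :=
  α.2.1.onV ⟨1, one_dvd α.1⟩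

/-- The source `s(λ) = λ(w)`. -/
def LamBS.sV {E : TwoColouredGraph} {C : Set (SquareBS E)} (α : LamBS E C) : E.V :=
  α.2.1.onV ⟨α.1, dvd_refl α.1⟩

/-- The identity `λ_v` as an element of `Λ`. -/
def idLamBS (E : TwoColouredGraph) (C : Set (SquareBS E)) (v : E.V) : LamBS E C :=
  ⟨1, idMorBS E v, idMorBS_compatible E C v⟩

/-- `γ` is the composition `αβ`, i.e. `d(γ) = d(α)d(β)`, `γ|_{E_{d(α)}} = α` and
`γ|*_{[d(α), d(α)d(β)]} = β`. -/
def IsCompBS {E : TwoColouredGraph} {C : Set (SquareBS E)} (α β γ : LamBS E C) : Prop :=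
  ∃ h : γ.1 = α.1 * β.1,
    restrictBS γ.2.1 α.1 ⟨β.1, h⟩ = α.2.1 ∧ starRestrictBS γ.2.1 α.1 β.1 h = β.2.1

theorem eq_uabb_uba (u : BS) : u * BSa * BSb * BSb = u * BSb * BSa := by
  rw [mul_assoc (u * BSa) BSb BSb, mul_assoc u BSa (BSb * BSb), ← mul_assoc BSa BSb BSb,
    bs_rel, ← mul_assoc]

theorem dvd_u_uba (u : BS) : u ∣ u * BSb * BSa :=
  dvd_mul_of_dvd_left (dvd_mul_right u BSb) BSa

theorem dvd_ua_uba (u : BS) : u * BSa ∣ u * BSb * BSa :=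
  ⟨BSb * BSb, by rw [← mul_assoc, eq_uabb_uba]⟩

theorem dvd_uab_uba (u : BS) : u * BSa * BSb ∣ u * BSb * BSa := ⟨BSb, (eq_uabb_uba u).symm⟩

/-!
Write `z = p · z_{n-1} z_n`. Since `d*(z) = d*(p) · b a = u · b a`, right cancellation in
`BS(2,1)⁺` gives `d*(p) = u`. Right cancellation holds because `BS(2,1)⁺` acts faithfully on `ℕ`
from the right, `a` by doubling and `b` by adding one: every element has a normal form `aⁱ bʲ`,
which acts as `n ↦ 2ⁱ n + j`.

Traversing `λ` is a condition on each edge separately: it must be the image under `λ` of the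
model edge at the degree of the prefix before it. So the condition splits along concatenation.
The prefix `p` still satisfies it, the three new edges satisfy it by construction, and the new
path has degree `u a b² = u b a`.
-/

theorem bs_b_pow_mul_a (j : ℕ) : BSb ^ j * BSa = BSa * BSb ^ (2 * j) := by
  induction j with
  | zero => simp
  | succ j ih =>
    rw [pow_succ, mul_assoc, ← bs_rel, ← mul_assoc, ← mul_assoc, ih, mul_assoc BSa, mul_assoc,
      ← pow_succ, ← pow_succ]
    ring_nf

theorem bs_normal_form (x : BS) : ∃ i j : ℕ, x = BSa ^ i * BSb ^ j := by
  induction x using Submonoid.induction_of_closure_eq_top_right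
    (PresentedMonoid.closure_range_of bsStep) with
  | one => exact ⟨0, 0, by simp⟩
  | mul_right x y hy ih =>
    obtain ⟨i, j, rfl⟩ := ih
    obtain ⟨_ | _, rfl⟩ := hy
    · refine ⟨i + 1, 2 * j, ?_⟩
      change _ * BSa = _
      rw [mul_assoc, bs_b_pow_mul_a, pow_succ, mul_assoc]
    · exact ⟨i, j + 1, by rw [pow_succ, ← mul_assoc]; rfl⟩

def bsAct : BS →* (Function.End ℕ)ᵐᵒᵖ :=
  PresentedMonoid.lift (fun l => .op fun n => if l then n + 1 else 2 * n) (by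
    rintro x y ⟨rfl, rfl⟩
    refine MulOpposite.unop_injective (funext fun n => ?_)
    simp only [map_mul, FreeMonoid.lift_eval_of]
    show 2 * n + 1 + 1 = 2 * (n + 1)
    ring)

theorem bsAct_mul_apply (x y : BS) (n : ℕ) :
    (bsAct (x * y)).unop n = (bsAct y).unop ((bsAct x).unop n) := by
  rw [map_mul]; rfl

theorem bsAct_a_pow_apply (i n : ℕ) : (bsAct (BSa ^ i)).unop n = 2 ^ i * n := by
  induction i generalizing n with
  | zero => rw [pow_zero, map_one, pow_zero, one_mul]; rfl
  | succ i ih => rw [pow_succ, bsAct_mul_apply, ih, pow_succ, mul_comm _ 2, mul_assoc]; rfl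

theorem bsAct_b_pow_apply (j n : ℕ) : (bsAct (BSb ^ j)).unop n = n + j := by
  induction j generalizing n with
  | zero => rw [pow_zero, map_one]; rfl
  | succ j ih => rw [pow_succ, bsAct_mul_apply, ih]; rfl

theorem bsAct_normal_form_apply (i j n : ℕ) :
    (bsAct (BSa ^ i * BSb ^ j)).unop n = 2 ^ i * n + j := by
  rw [bsAct_mul_apply, bsAct_a_pow_apply, bsAct_b_pow_apply]

theorem bsAct_injective : Function.Injective bsAct := by
  intro x y h
  obtain ⟨i, j, rfl⟩ := bs_normal_form x
  obtain ⟨k, l, rfl⟩ := bs_normal_form y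
  have h0 := congrArg (fun f => f.unop 0) h
  have h1 := congrArg (fun f => f.unop 1) h
  simp only [bsAct_normal_form_apply] at h0 h1
  obtain rfl : j = l := by simpa using h0
  obtain rfl : i = k := Nat.pow_right_injective le_rfl (by simpa using h1)
  rfl

theorem bsAct_apply_injective (x : BS) : Function.Injective (bsAct x).unop := by
  obtain ⟨i, j, rfl⟩ := bs_normal_form x
  intro m n h
  simp only [bsAct_normal_form_apply] at h
  exact Nat.eq_of_mul_eq_mul_left (Nat.two_pow_pos i) (by omega)

instance : IsRightCancelMul BS where
  mul_right_cancel c x y h := bsAct_injective <| MulOpposite.unop_injective <| funext fun n =>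
    bsAct_apply_injective c <| by
      simpa only [bsAct_mul_apply] using congrArg (fun w => (bsAct w).unop n) h

theorem List.take_length_sub_two_append {α : Type*} (l : List α) (h : 2 ≤ l.length) :
    l.take (l.length - 2) ++ [l[l.length - 2], l[l.length - 1]] = l := by
  conv_rhs => rw [← l.take_append_drop (l.length - 2)]
  rw [List.drop_eq_getElem_cons (by omega), List.drop_eq_getElem_cons (by omega),
    List.drop_of_length_le (by omega)]
  simp only [show l.length - 2 + 1 = l.length - 1 by omega]

@[simp]
theorem pathDegBS_nil (E : TwoColouredGraph) : pathDegBS E [] = 1 := rfl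

@[simp]
theorem pathDegBS_cons (E : TwoColouredGraph) (e : E.Edge) (x : List E.Edge) :
    pathDegBS E (e :: x) = bsGen (E.c e) * pathDegBS E x := rfl

theorem pathDegBS_append (E : TwoColouredGraph) (x y : List E.Edge) :
    pathDegBS E (x ++ y) = pathDegBS E x * pathDegBS E y := by
  simp only [pathDegBS, List.map_append, List.prod_append]

section Follows

variable {E : TwoColouredGraph} {w : BS}

def IsImageEdge (lam : CGMor (bsModel w) E) (z : BS) (e : E.Edge) : Prop :=
  ∃ h, lam.onE ⟨(z, E.c e), h⟩ = e

theorem c_onE (lam : CGMor (bsModel w) E) {z : BS} {l : Bool} (h : z ∣ w ∧ z * bsGen l ∣ w) :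
    E.c (lam.onE ⟨(z, l), h⟩) = l :=
  lam.map_c _

theorem isImageEdge_onE (lam : CGMor (bsModel w) E) {z : BS} {l : Bool}
    (h : z ∣ w ∧ z * bsGen l ∣ w) : IsImageEdge lam z (lam.onE ⟨(z, l), h⟩) := by
  unfold IsImageEdge
  rw [c_onE]
  exact ⟨h, rfl⟩

theorem pathDegBS_onE_cons (lam : CGMor (bsModel w) E) {z : BS} {l : Bool}
    (h : z ∣ w ∧ z * bsGen l ∣ w) (x : List E.Edge) :
    pathDegBS E (lam.onE ⟨(z, l), h⟩ :: x) = bsGen l * pathDegBS E x := by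
  rw [pathDegBS_cons, c_onE]

def FollowsFrom (lam : CGMor (bsModel w) E) : BS → List E.Edge → Prop
  | _, [] => True
  | z₀, e :: x => IsImageEdge lam z₀ e ∧ FollowsFrom lam (z₀ * bsGen (E.c e)) x

theorem followsFrom_append (lam : CGMor (bsModel w) E) (z₀ : BS) (x y : List E.Edge) :
    FollowsFrom lam z₀ (x ++ y) ↔
      FollowsFrom lam z₀ x ∧ FollowsFrom lam (z₀ * pathDegBS E x) y := by
  induction x generalizing z₀ with
  | nil => simp [FollowsFrom]
  | cons e x ih =>
    simp only [List.cons_append, FollowsFrom, ih, and_assoc, pathDegBS_cons, mul_assoc]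

theorem followsFrom_onE_cons (lam : CGMor (bsModel w) E) {z : BS} {l : Bool}
    (h : z ∣ w ∧ z * bsGen l ∣ w) {x : List E.Edge} (hx : FollowsFrom lam (z * bsGen l) x) :
    FollowsFrom lam z (lam.onE ⟨(z, l), h⟩ :: x) :=
  ⟨isImageEdge_onE lam h, by rwa [c_onE]⟩

theorem followsFrom_iff_forall_getElem (lam : CGMor (bsModel w) E) (z₀ : BS)
    (x : List E.Edge) :
    FollowsFrom lam z₀ x ↔
      ∀ n (hn : n < x.length), IsImageEdge lam (z₀ * pathDegBS E (x.take n)) x[n] := by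
  induction x generalizing z₀ with
  | nil => simp [FollowsFrom]
  | cons e x ih =>
    simp only [FollowsFrom, ih, List.length_cons, Nat.forall_lt_succ_left', List.take_zero,
      List.take_succ_cons, List.getElem_cons_zero, List.getElem_cons_succ, pathDegBS_nil,
      pathDegBS_cons, mul_one, mul_assoc]

theorem traversesBS_iff (lam : CGMor (bsModel w) E) (v : E.V) (x : List E.Edge) :
    TraversesBS E lam v x ↔
      pathDegBS E x = w ∧ lam.onV ⟨1, one_dvd w⟩ = v ∧ FollowsFrom lam 1 x := by
  simp only [followsFrom_iff_forall_getElem, one_mul]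
  constructor
  · rintro ⟨hd, hv, he⟩
    exact ⟨hd, hv, fun n hn => ⟨_, he n hn⟩⟩
  · rintro ⟨hd, hv, he⟩
    exact ⟨hd, hv, fun n hn => let ⟨_, h⟩ := he n hn; h⟩

end Follows

theorem flip_last_square_traverses (E : TwoColouredGraph) (v : E.V) (z : List E.Edge)
    (hlen : 2 ≤ z.length)
    (hc1 : E.c (z.get ⟨z.length - 2, by omega⟩) = true)
    (hc2 : E.c (z.get ⟨z.length - 1, by omega⟩) = false)
    (u : BS) (hu : pathDegBS E z = u * BSb * BSa)
    (lam : CGMor (bsModel (pathDegBS E z)) E)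
    (htrav : TraversesBS E lam v z) :
    TraversesBS E lam v (z.take (z.length - 2) ++
      [lam.onE ⟨(u, false), (dvd_u_uba u).trans (dvd_of_eq hu.symm),
          (dvd_ua_uba u).trans (dvd_of_eq hu.symm)⟩,
       lam.onE ⟨(u * BSa, true), (dvd_ua_uba u).trans (dvd_of_eq hu.symm),
          (dvd_uab_uba u).trans (dvd_of_eq hu.symm)⟩,
       lam.onE ⟨(u * BSa * BSb, true), (dvd_uab_uba u).trans (dvd_of_eq hu.symm),
          dvd_of_eq ((eq_uabb_uba u).trans hu.symm)⟩]) := by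
  set p := z.take (z.length - 2)
  have hsplit : p ++ [z[z.length - 2], z[z.length - 1]] = z := z.take_length_sub_two_append hlen
  obtain ⟨-, hv, hz⟩ := (traversesBS_iff lam v z).1 htrav
  have hp : FollowsFrom lam 1 p := by
    have h : FollowsFrom lam 1 (p ++ [z[z.length - 2], z[z.length - 1]]) := by rwa [hsplit]
    exact ((followsFrom_append lam 1 _ _).1 h).1
  have hpu : pathDegBS E p = u := by
    refine mul_right_cancel (b := BSb * BSa) ?_
    rw [← mul_assoc u, ← hu]
    conv_rhs => rw [← hsplit]
    simp only [List.get_eq_getElem] at hc1 hc2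
    rw [pathDegBS_append, pathDegBS_cons, pathDegBS_cons, pathDegBS_nil, hc1, hc2, mul_one]
    rfl
  refine (traversesBS_iff lam v _).2 ⟨?_, hv, (followsFrom_append lam 1 _ _).2 ⟨hp, ?_⟩⟩
  · rw [pathDegBS_append, hpu]
    refine Eq.trans ?_ ((eq_uabb_uba u).trans hu.symm)
    rw [pathDegBS_onE_cons, pathDegBS_onE_cons, pathDegBS_onE_cons, pathDegBS_nil]
    simp only [mul_one, mul_assoc]
    rfl
  · rw [one_mul, hpu]
    exact followsFrom_onE_cons lam _ <| followsFrom_onE_cons lam _ <|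
      followsFrom_onE_cons lam _ trivial
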